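/- Let n ≥ 1 and let p, q be homogeneous polynomials of degree n in ℂ[x_0,x_1,x_2]. Then there exists a Bezout decomposition of (p,q): symmetric complex matrices β^0, β^1, β^2, with rows and columns indexed by {α ∈ ℕ³ : |α| = n−1}, such that p(x)q(y) − q(x)p(y) = Σ_{|i| = |j| = n−1} x^i y^j ( β^0_{ij} (x_1 y_2 − x_2 y_1) + β^1_{ij} (x_2 y_0 − x_0 y_2) + β^2_{ij} (x_0 y_1 − x_1 y_0) ) holds for all x, y ∈ ℂ³. -/

import Mathlib

/-- Multi-indices `α ∈ ℕ³` (as triples) of total degree `k`. -/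
abbrev TriIdx (k : ℕ) : Type := {α : ℕ × ℕ × ℕ // α.1 + α.2.1 + α.2.2 = k}

noncomputable instance (k : ℕ) : Fintype (TriIdx k) :=
  Fintype.ofInjective
    (fun α : TriIdx k =>
      ((⟨α.1.1, by have := α.2; omega⟩ : Fin (k + 1)),
       (⟨α.1.2.1, by have := α.2; omega⟩ : Fin (k + 1)),
       (⟨α.1.2.2, by have := α.2; omega⟩ : Fin (k + 1))))
    (by
      rintro ⟨⟨a1, a2, a3⟩, ha⟩ ⟨⟨b1, b2, b3⟩, hb⟩ hEq
      simp only [Prod.mk.injEq, Fin.mk.injEq] at hEq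
      exact Subtype.ext (by simp [hEq.1, hEq.2.1, hEq.2.2]))

open Finset

abbrev V3 : Type := ℂ × ℂ × ℂ

/-- monomial evaluation -/
def mon (a : ℕ × ℕ × ℕ) (x : V3) : ℂ := x.1 ^ a.1 * x.2.1 ^ a.2.1 * x.2.2 ^ a.2.2

/-- coordinate -/
def xc : Fin 3 → V3 → ℂ := ![fun x => x.1, fun x => x.2.1, fun x => x.2.2]

/-- the three 2×2 minors -/
def dd : Fin 3 → V3 → V3 → ℂ :=
  ![fun x y => x.2.1 * y.2.2 - x.2.2 * y.2.1,
    fun x y => x.2.2 * y.1 - x.1 * y.2.2,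
    fun x y => x.1 * y.2.1 - x.2.1 * y.1]

def ek : Fin 3 → ℕ × ℕ × ℕ := ![(1,0,0),(0,1,0),(0,0,1)]

lemma mon_add (a b : ℕ × ℕ × ℕ) (x : V3) : mon (a + b) x = mon a x * mon b x := by
  simp [mon, Prod.fst_add, Prod.snd_add, pow_add]; ring

lemma mon_ek (k : Fin 3) (x : V3) : mon (ek k) x = xc k x := by
  fin_cases k <;> simp [mon, ek, xc]

def Gen (m : ℕ) : Set (V3 → V3 → ℂ) :=
  { f | ∃ i j : ℕ × ℕ × ℕ, ∃ c : Fin 3,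
      i.1 + i.2.1 + i.2.2 = m ∧ j.1 + j.2.1 + j.2.2 = m ∧
      f = fun x y => mon i x * mon j y * dd c x y }

noncomputable def Rn (m : ℕ) : Submodule ℂ (V3 → V3 → ℂ) := Submodule.span ℂ (Gen m)

lemma gen_mem {m : ℕ} {i j : ℕ × ℕ × ℕ} (c : Fin 3)
    (hi : i.1 + i.2.1 + i.2.2 = m) (hj : j.1 + j.2.1 + j.2.2 = m) :
    (fun x y => mon i x * mon j y * dd c x y) ∈ Rn m :=
  Submodule.subset_span ⟨i, j, c, hi, hj, rfl⟩

/-- cross terms are in the span -/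
lemma cross_mem {m : ℕ} (k l : Fin 3) {i j : ℕ × ℕ × ℕ}
    (hi : i.1 + i.2.1 + i.2.2 = m) (hj : j.1 + j.2.1 + j.2.2 = m) :
    (fun x y => (xc k x * xc l y - xc l x * xc k y) * (mon i x * mon j y)) ∈ Rn m := by
  have emem : ∀ (c : Fin 3) (s : ℂ),
      (fun x y => (xc k x * xc l y - xc l x * xc k y) * (mon i x * mon j y))
        = (fun x y => s * (mon i x * mon j y * dd c x y)) →
      (fun x y => (xc k x * xc l y - xc l x * xc k y) * (mon i x * mon j y)) ∈ Rn m := by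
    intro c s h
    rw [h]
    have := Submodule.smul_mem (Rn m) s (gen_mem c hi hj)
    convert this using 2
    rfl
  have zmem : (fun x y => (xc k x * xc l y - xc l x * xc k y) * (mon i x * mon j y))
        = (fun (_ _ : V3) => (0:ℂ)) →
      (fun x y => (xc k x * xc l y - xc l x * xc k y) * (mon i x * mon j y)) ∈ Rn m := by
    intro h; rw [h]; exact Submodule.zero_mem _
  fin_cases k <;> fin_cases l
  · exact zmem (by funext x y; simp [xc]; try ring)
  · exact emem 2 1 (by funext x y; simp [xc, dd]; try ring)
  · exact emem 1 (-1) (by funext x y; simp [xc, dd]; try ring)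
  · exact emem 2 (-1) (by funext x y; simp [xc, dd]; try ring)
  · exact zmem (by funext x y; simp [xc]; try ring)
  · exact emem 0 1 (by funext x y; simp [xc, dd]; try ring)
  · exact emem 1 1 (by funext x y; simp [xc, dd]; try ring)
  · exact emem 0 (-1) (by funext x y; simp [xc, dd]; try ring)
  · exact zmem (by funext x y; simp [xc]; try ring)

/-- multiplying by `x_k y_l` raises the level -/
lemma Rmul {m : ℕ} (k l : Fin 3) {f : V3 → V3 → ℂ} (hf : f ∈ Rn m) :
    (fun x y => xc k x * xc l y * f x y) ∈ Rn (m + 1) := by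
  induction hf using Submodule.span_induction with
  | mem g hg =>
    obtain ⟨i, j, c, hi, hj, rfl⟩ := hg
    have : (fun x y => xc k x * xc l y * (mon i x * mon j y * dd c x y))
        = fun x y => mon (i + ek k) x * mon (j + ek l) y * dd c x y := by
      funext x y; rw [mon_add, mon_add, mon_ek, mon_ek]; ring
    rw [this]
    refine gen_mem c ?_ ?_ <;> fin_cases k <;> fin_cases l <;>
      simp [ek, Prod.fst_add, Prod.snd_add] <;> omega
  | zero =>
    have : (fun x y => xc k x * xc l y * (0 : V3 → V3 → ℂ) x y)
        = (0 : V3 → V3 → ℂ) := by funext x y; simp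
    rw [this]; exact Submodule.zero_mem _
  | add g h _ _ hg hh =>
    have : (fun x y => xc k x * xc l y * (g + h) x y)
        = (fun x y => xc k x * xc l y * g x y) + (fun x y => xc k x * xc l y * h x y) := by
      funext x y; simp; ring
    rw [this]; exact Submodule.add_mem _ hg hh
  | smul s g _ hg =>
    have : (fun x y => xc k x * xc l y * (s • g) x y)
        = s • (fun x y => xc k x * xc l y * g x y) := by
      funext x y; simp; ring
    rw [this]; exact Submodule.smul_mem _ s hg

lemma exists_split {m : ℕ} {a : ℕ × ℕ × ℕ} (ha : a.1 + a.2.1 + a.2.2 = m + 1) :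
    ∃ (k : Fin 3) (a' : ℕ × ℕ × ℕ), a'.1 + a'.2.1 + a'.2.2 = m ∧ a = a' + ek k := by
  obtain ⟨a1, a2, a3⟩ := a
  simp only at ha
  rcases Nat.lt_or_ge 0 a1 with h | h
  · exact ⟨0, (a1 - 1, a2, a3), by show a1-1+a2+a3=m; omega, by simp [ek, Prod.ext_iff]; omega⟩
  rcases Nat.lt_or_ge 0 a2 with h2 | h2
  · exact ⟨1, (a1, a2 - 1, a3), by show a1+(a2-1)+a3=m; omega, by simp [ek, Prod.ext_iff]; omega⟩
  · exact ⟨2, (a1, a2, a3 - 1), by show a1+a2+(a3-1)=m; omega, by simp [ek, Prod.ext_iff]; omega⟩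

/-- Main induction: monomial brackets lie in the span. -/
lemma bracket_mem : ∀ (m : ℕ) (a b : ℕ × ℕ × ℕ),
    a.1 + a.2.1 + a.2.2 = m + 1 → b.1 + b.2.1 + b.2.2 = m + 1 →
    (fun x y => mon a x * mon b y - mon b x * mon a y) ∈ Rn m := by
  intro m
  induction m with
  | zero =>
    intro a b ha hb
    obtain ⟨k, a', ha', rfl⟩ := exists_split ha
    obtain ⟨l, b', hb', rfl⟩ := exists_split hb
    have ea : a' = (0,0,0) := by obtain ⟨x,y,z⟩ := a'; simp only at ha'; simp [Prod.ext_iff]; omega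
    have eb : b' = (0,0,0) := by obtain ⟨x,y,z⟩ := b'; simp only at hb'; simp [Prod.ext_iff]; omega
    subst ea eb
    have : (fun x y => mon ((0,0,0) + ek k) x * mon ((0,0,0) + ek l) y
          - mon ((0,0,0) + ek l) x * mon ((0,0,0) + ek k) y)
        = fun x y => (xc k x * xc l y - xc l x * xc k y)
            * (mon (0,0,0) x * mon (0,0,0) y) := by
      funext x y
      rw [mon_add, mon_add, mon_add, mon_add, mon_ek, mon_ek, mon_ek, mon_ek]
      ring
    rw [this]
    exact cross_mem k l (by simp) (by simp)
  | succ m ih =>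
    intro a b ha hb
    obtain ⟨k, a', ha', rfl⟩ := exists_split ha
    obtain ⟨l, b', hb', rfl⟩ := exists_split hb
    have key : (fun x y => mon (a' + ek k) x * mon (b' + ek l) y
          - mon (b' + ek l) x * mon (a' + ek k) y)
        = (fun x y => (xc k x * xc l y - xc l x * xc k y) * (mon a' x * mon b' y))
          + fun x y => xc l x * xc k y
              * (fun x y => mon a' x * mon b' y - mon b' x * mon a' y) x y := by
      funext x y
      simp only [Pi.add_apply]
      rw [mon_add, mon_add, mon_add, mon_add, mon_ek, mon_ek, mon_ek, mon_ek]
      ring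
    rw [key]
    exact Submodule.add_mem _ (cross_mem k l ha' hb') (Rmul l k (ih a' b' ha' hb'))

/-- The triple-index version of the summation on display -/
noncomputable def MF (m : ℕ) : Submodule ℂ (V3 → V3 → ℂ) where
  carrier := {f | ∃ B : Fin 3 → TriIdx m → TriIdx m → ℂ, ∀ x y, f x y =
    ∑ i : TriIdx m, ∑ j : TriIdx m,
      mon i.1 x * mon j.1 y * (∑ c : Fin 3, B c i j * dd c x y)}
  zero_mem' := ⟨fun _ _ _ => 0, by intro x y; simp⟩
  add_mem' := by
    rintro f g ⟨B, hB⟩ ⟨C, hC⟩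
    refine ⟨fun c i j => B c i j + C c i j, fun x y => ?_⟩
    simp only [Pi.add_apply, hB x y, hC x y, ← Finset.sum_add_distrib]
    refine Finset.sum_congr rfl fun i _ => Finset.sum_congr rfl fun j _ => ?_
    simp only [Fin.sum_univ_three]; ring
  smul_mem' := by
    rintro s f ⟨B, hB⟩
    refine ⟨fun c i j => s * B c i j, fun x y => ?_⟩
    simp only [Pi.smul_apply, smul_eq_mul, hB x y, Finset.mul_sum]
    refine Finset.sum_congr rfl fun i _ => Finset.sum_congr rfl fun j _ => ?_
    simp only [Fin.sum_univ_three]; ring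

lemma Rn_le_MF (m : ℕ) : Rn m ≤ MF m := by
  rw [Rn, Submodule.span_le]
  rintro f ⟨i, j, c, hi, hj, rfl⟩
  refine ⟨fun c' i' j' => (if c' = c then 1 else 0) * (if i' = ⟨i, hi⟩ then 1 else 0)
      * (if j' = ⟨j, hj⟩ then 1 else 0), fun x y => ?_⟩
  symm
  rw [Fintype.sum_eq_single (⟨i, hi⟩ : TriIdx m) (fun b hb => by simp [hb])]
  rw [Fintype.sum_eq_single (⟨j, hj⟩ : TriIdx m) (fun b hb => by simp [hb])]
  fin_cases c <;> simp [Fin.sum_univ_three]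

lemma dd_antisymm (c : Fin 3) (x y : V3) : dd c y x = - dd c x y := by
  fin_cases c <;> simp [dd] <;> ring

def tri (d : Fin 3 →₀ ℕ) : ℕ × ℕ × ℕ := (d 0, d 1, d 2)

lemma evalT (r : MvPolynomial (Fin 3) ℂ) (x : V3) :
    MvPolynomial.eval ![x.1, x.2.1, x.2.2] r
      = ∑ d ∈ r.support, r.coeff d * mon (tri d) x := by
  rw [MvPolynomial.eval_eq']
  refine Finset.sum_congr rfl fun d _ => ?_
  simp [Fin.prod_univ_three, mon, tri]

lemma deg3 {n : ℕ} {r : MvPolynomial (Fin 3) ℂ} (hr : r.IsHomogeneous n)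
    {d : Fin 3 →₀ ℕ} (hd : d ∈ r.support) :
    (tri d).1 + (tri d).2.1 + (tri d).2.2 = n := by
  have h := hr (MvPolynomial.mem_support_iff.mp hd)
  rw [show (Finsupp.weight 1 : (Fin 3 →₀ ℕ) →+ ℕ) = Finsupp.weight (fun _ => 1) from rfl,
    ← Finsupp.degree_eq_weight_one] at h
  have : d.degree = ∑ i : Fin 3, d i := by
    rw [Finsupp.degree]
    exact Finset.sum_subset (Finset.subset_univ _)
      (fun i _ hi => Finsupp.notMem_support_iff.mp hi)
  rw [this, Fin.sum_univ_three] at h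
  simpa [tri] using h


/-- Every pair `(p,q)` of homogeneous polynomials of degree `n ≥ 1` in
`ℂ[x₀,x₁,x₂]` admits a Bezout decomposition: symmetric matrices `β⁰, β¹, β²` indexed by
`{α ∈ ℕ³ : |α| = n−1}` such that
`p(x)q(y) − q(x)p(y) = Σ_{|i|=|j|=n−1} x^i y^j (β⁰_{ij}(x₁y₂−x₂y₁) + β¹_{ij}(x₂y₀−x₀y₂)
+ β²_{ij}(x₀y₁−x₁y₀))` for all `x, y ∈ ℂ³`. -/
theorem exists_bezout_decomposition
    (n : ℕ) (hn : 1 ≤ n) (p q : MvPolynomial (Fin 3) ℂ)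
    (hp : p.IsHomogeneous n) (hq : q.IsHomogeneous n) :
    ∃ β0 β1 β2 : TriIdx (n - 1) → TriIdx (n - 1) → ℂ,
      (∀ i j, β0 i j = β0 j i) ∧ (∀ i j, β1 i j = β1 j i) ∧ (∀ i j, β2 i j = β2 j i) ∧
      ∀ x₀ x₁ x₂ y₀ y₁ y₂ : ℂ,
        MvPolynomial.eval ![x₀, x₁, x₂] p * MvPolynomial.eval ![y₀, y₁, y₂] q -
            MvPolynomial.eval ![x₀, x₁, x₂] q * MvPolynomial.eval ![y₀, y₁, y₂] p =
          ∑ i : TriIdx (n - 1), ∑ j : TriIdx (n - 1),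
            (x₀ ^ i.1.1 * x₁ ^ i.1.2.1 * x₂ ^ i.1.2.2) *
              (y₀ ^ j.1.1 * y₁ ^ j.1.2.1 * y₂ ^ j.1.2.2) *
              (β0 i j * (x₁ * y₂ - x₂ * y₁) + β1 i j * (x₂ * y₀ - x₀ * y₂) +
                β2 i j * (x₀ * y₁ - x₁ * y₀)) := by
  -- the antisymmetric bracket as a function on `V3 × V3`
  set F : V3 → V3 → ℂ := fun x y =>
    MvPolynomial.eval ![x.1, x.2.1, x.2.2] p * MvPolynomial.eval ![y.1, y.2.1, y.2.2] q -
      MvPolynomial.eval ![x.1, x.2.1, x.2.2] q * MvPolynomial.eval ![y.1, y.2.1, y.2.2] p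
    with hFdef
  -- F lies in the span of the generators
  have hFmem : F ∈ Rn (n - 1) := by
    have hFeq : F = ∑ a ∈ p.support, ∑ b ∈ q.support,
        (p.coeff a * q.coeff b) •
          (fun x y => mon (tri a) x * mon (tri b) y - mon (tri b) x * mon (tri a) y) := by
      funext x y
      simp only [hFdef, Finset.sum_apply, Pi.smul_apply, smul_eq_mul]
      rw [evalT p x, evalT q y, evalT q x, evalT p y, Finset.sum_mul_sum, Finset.sum_mul_sum,
        Finset.sum_comm (s := q.support)]
      rw [← Finset.sum_sub_distrib]
      refine Finset.sum_congr rfl fun a _ => ?_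
      rw [← Finset.sum_sub_distrib]
      exact Finset.sum_congr rfl fun b _ => by ring
    rw [hFeq]
    refine Submodule.sum_mem _ fun a ha => Submodule.sum_mem _ fun b hb =>
      Submodule.smul_mem _ _ ?_
    exact bracket_mem (n - 1) (tri a) (tri b)
      (by have := deg3 hp ha; omega) (by have := deg3 hq hb; omega)
  obtain ⟨B, hB⟩ := Rn_le_MF (n - 1) hFmem
  -- the swapped matrices also work, by antisymmetry
  have hswap : ∀ x y, F x y = ∑ i : TriIdx (n-1), ∑ j : TriIdx (n-1),
      mon i.1 x * mon j.1 y * (∑ c : Fin 3, B c j i * dd c x y) := by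
    intro x y
    have hFanti : F y x = - F x y := by rw [hFdef]; set_option maxRecDepth 4000 in beta_reduce; ring
    have h1 := hB y x
    rw [hFanti] at h1
    have h2 : F x y = ∑ i : TriIdx (n-1), ∑ j : TriIdx (n-1),
        mon i.1 y * mon j.1 x * (∑ c : Fin 3, B c i j * dd c x y) := by
      rw [← neg_eq_iff_eq_neg.mpr h1.symm]
      rw [← Finset.sum_neg_distrib]
      refine Finset.sum_congr rfl fun i _ => ?_
      rw [← Finset.sum_neg_distrib]
      refine Finset.sum_congr rfl fun j _ => ?_
      simp only [Fin.sum_univ_three]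
      rw [dd_antisymm 0 x y, dd_antisymm 1 x y, dd_antisymm 2 x y]
      ring
    rw [h2, Finset.sum_comm]
    refine Finset.sum_congr rfl fun i _ => Finset.sum_congr rfl fun j _ => ?_
    ring
  -- symmetrized matrices
  refine ⟨fun i j => (B 0 i j + B 0 j i) / 2, fun i j => (B 1 i j + B 1 j i) / 2,
      fun i j => (B 2 i j + B 2 j i) / 2,
      fun i j => by ring, fun i j => by ring, fun i j => by ring, ?_⟩
  intro x₀ x₁ x₂ y₀ y₁ y₂
  have hb := hB (x₀, x₁, x₂) (y₀, y₁, y₂)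
  have hs := hswap (x₀, x₁, x₂) (y₀, y₁, y₂)
  have key : (∑ i : TriIdx (n - 1), ∑ j : TriIdx (n - 1),
      (x₀ ^ i.1.1 * x₁ ^ i.1.2.1 * x₂ ^ i.1.2.2) *
        (y₀ ^ j.1.1 * y₁ ^ j.1.2.1 * y₂ ^ j.1.2.2) *
        ((B 0 i j + B 0 j i) / 2 * (x₁ * y₂ - x₂ * y₁)
          + (B 1 i j + B 1 j i) / 2 * (x₂ * y₀ - x₀ * y₂)
          + (B 2 i j + B 2 j i) / 2 * (x₀ * y₁ - x₁ * y₀)))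
      = ((∑ i : TriIdx (n-1), ∑ j : TriIdx (n-1),
            mon i.1 (x₀,x₁,x₂) * mon j.1 (y₀,y₁,y₂)
              * (∑ c : Fin 3, B c i j * dd c (x₀,x₁,x₂) (y₀,y₁,y₂)))
          + (∑ i : TriIdx (n-1), ∑ j : TriIdx (n-1),
            mon i.1 (x₀,x₁,x₂) * mon j.1 (y₀,y₁,y₂)
              * (∑ c : Fin 3, B c j i * dd c (x₀,x₁,x₂) (y₀,y₁,y₂)))) / 2 := by
    rw [← Finset.sum_add_distrib, Finset.sum_div]
    refine Finset.sum_congr rfl fun i _ => ?_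
    rw [← Finset.sum_add_distrib, Finset.sum_div]
    refine Finset.sum_congr rfl fun j _ => ?_
    simp only [Fin.sum_univ_three, mon, dd, Matrix.cons_val_zero, Matrix.cons_val_one,
      Matrix.head_cons, Matrix.cons_val_two, Matrix.tail_cons]
    ring
  rw [key, ← hb, ← hs]
  have : F (x₀, x₁, x₂) (y₀, y₁, y₂)
      = MvPolynomial.eval ![x₀, x₁, x₂] p * MvPolynomial.eval ![y₀, y₁, y₂] q -
          MvPolynomial.eval ![x₀, x₁, x₂] q * MvPolynomial.eval ![y₀, y₁, y₂] p := rfl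
  rw [this]
  ring
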